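/- Let (𝒢, Γ) be a finite tree of finite p-groups with cyclic edge groups such that 𝒢(e) ≠ 𝒢(v) for every edge e and incident vertex v, and let Γ be a segment with consecutively numbered edges. Then for the fundamental pro-p group G = Π₁(𝒢, Γ), d(G) ≥ (number of edges of Γ)/2, so d(G) tends to infinity as |Γ| tends to infinity. -/

import Mathlib

/-!
A family of homomorphisms `χ i : V i → ℤ/p` that agree on the edge groups extends, by the
universal property, to a continuous homomorphism `G → ℤ/p`, and such homomorphisms are
determined by their values on a topological generating set; hence `p ^ m ≤ p ^ d(G)`, where `m`
is the dimension of the space of compatible families. As the edge groups are cyclic,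
compatibility is one linear condition per edge. A proper subgroup of a finite `p`-group lies in
the kernel of a nonzero character, so the condition of an edge is vacuous unless one of its
endpoints has a character space of dimension at least two. If `t` vertices are of this kind,
each being an endpoint of at most two edges, then `m ≥ n + 1 + t - min(n, 2t) ≥ n/2 + 1`.
-/

/-- A pro-`p` group: a compact, totally disconnected topological group in which
every open normal subgroup has `p`-power index. -/
def IsProP (p : ℕ) (G : Type*) [Group G] [TopologicalSpace G] [IsTopologicalGroup G] : Prop :=
  CompactSpace G ∧ TotallyDisconnectedSpace G ∧
    ∀ U : Subgroup G, U.Normal → IsOpen (U : Set G) → ∃ n : ℕ, U.index = p ^ n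

/-- `dmin G` is the minimal number of topological generators of `G`. -/
noncomputable def dmin (G : Type*) [Group G] [TopologicalSpace G] [IsTopologicalGroup G] : ℕ :=
  sInf {n : ℕ | ∃ S : Finset G, S.card = n ∧
    (Subgroup.closure (S : Set G)).topologicalClosure = ⊤}

/-- `G` is topologically finitely generated. -/
def TopFG (G : Type*) [Group G] [TopologicalSpace G] [IsTopologicalGroup G] : Prop :=
  ∃ S : Finset G, (Subgroup.closure (S : Set G)).topologicalClosure = ⊤

/-- `G` is procyclic: topologically generated by one element. -/
def Procyclic (G : Type*) [Group G] [TopologicalSpace G] [IsTopologicalGroup G] : Prop :=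
  ∃ c : G, (Subgroup.closure ({c} : Set G)).topologicalClosure = ⊤

open Module Finset

instance {M N : Type*} [AddZeroClass M] [AddZeroClass N] [Finite M] [Finite N] :
    Finite (M →+ N) :=
  Finite.of_injective _ DFunLike.coe_injective

theorem nontrivial_of_zpowers_ne_top {G : Type*} [Group G] {g : G}
    (hg : Subgroup.zpowers g ≠ ⊤) : Nontrivial G :=
  not_subsingleton_iff_nontrivial.1 fun _ => hg (Subsingleton.elim _ _)

theorem MonoidHom.zpowers_apply_ne_top {E V : Type*} [Group E] [Group V] {f : E →* V}
    (hf : ¬Function.Surjective f) (a : E) : Subgroup.zpowers (f a) ≠ ⊤ :=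
  ne_top_of_le_ne_top (fun h => hf (MonoidHom.range_eq_top.1 h))
    (Subgroup.zpowers_le.2 ⟨a, rfl⟩)

namespace IsPGroup

variable {p : ℕ} [Fact p.Prime] {V : Type*} [Group V] [Finite V]

theorem exists_normal_index_eq_le (hV : IsPGroup p V) {H : Subgroup V} (hH : H ≠ ⊤) :
    ∃ K : Subgroup V, K.Normal ∧ K.index = p ∧ H ≤ K := by
  have hp := (Fact.out : p.Prime)
  obtain ⟨b, hb⟩ := hV.exists_card_eq
  obtain ⟨a, ha⟩ := (hV.to_subgroup H).exists_card_eq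
  obtain ⟨k, hk⟩ := hV.index H
  have hk0 : k ≠ 0 := by
    rintro rfl
    exact hH (Subgroup.index_eq_one.1 (by simpa using hk))
  have hab : a + k = b := by
    have := H.card_mul_index
    rw [ha, hk, hb, ← pow_add] at this
    exact Nat.pow_right_injective hp.two_le this
  obtain ⟨K, hKcard, hHK⟩ :=
    Sylow.exists_subgroup_card_pow_prime_le p (hb ▸ pow_dvd_pow p (Nat.sub_le b 1)) H ha
      (by omega : a ≤ b - 1)
  have hKindex : K.index = p := by
    have := K.card_mul_index
    rw [hKcard, hb, show b = b - 1 + 1 by omega, pow_succ] at this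
    exact Nat.eq_of_mul_eq_mul_left (pow_pos hp.pos _) this
  refine ⟨K, Subgroup.normal_of_index_eq_minFac_card ?_, hKindex, hHK⟩
  rw [hKindex, hb, hp.pow_minFac (by omega)]

theorem exists_addMonoidHom_ne_zero_of_ne_top (hV : IsPGroup p V) {H : Subgroup V}
    (hH : H ≠ ⊤) :
    ∃ χ : Additive V →+ ZMod p, χ ≠ 0 ∧ ∀ h ∈ H, χ (.ofMul h) = 0 := by
  obtain ⟨K, hKn, hKindex, hHK⟩ := hV.exists_normal_index_eq_le hH
  let e : V ⧸ K ≃* Multiplicative (ZMod p) := mulEquivOfPrimeCardEq hKindex (by simp)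
  refine ⟨MonoidHom.toAdditiveLeft (e.toMonoidHom.comp (QuotientGroup.mk' K)), ?_, ?_⟩
  · obtain ⟨v, hv⟩ := QuotientGroup.mk_surjective (e.symm (.ofAdd 1))
    refine DFunLike.ne_iff.2 ⟨.ofMul v, ?_⟩
    simp [hv]
  · intro h hh
    simp [(QuotientGroup.eq_one_iff h).2 (hHK hh)]

theorem one_le_finrank_addMonoidHom [Nontrivial V] (hV : IsPGroup p V) :
    1 ≤ finrank (ZMod p) (Additive V →+ ZMod p) := by
  obtain ⟨χ, hχ, -⟩ :=
    hV.exists_addMonoidHom_ne_zero_of_ne_top (bot_ne_top (α := Subgroup V))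
  exact finrank_pos_iff_exists_ne_zero.2 ⟨χ, hχ⟩

theorem addMonoidHom_apply_eq_zero_of_finrank_le_one (hV : IsPGroup p V) {v : V}
    (hv : Subgroup.zpowers v ≠ ⊤) (hd : finrank (ZMod p) (Additive V →+ ZMod p) ≤ 1)
    (χ : Additive V →+ ZMod p) : χ (.ofMul v) = 0 := by
  obtain ⟨χ₀, hχ₀, hχ₀v⟩ := hV.exists_addMonoidHom_ne_zero_of_ne_top hv
  obtain ⟨ψ, hψ⟩ := finrank_le_one_iff.1 hd
  obtain ⟨a, rfl⟩ := hψ χ₀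
  obtain ⟨b, rfl⟩ := hψ χ
  have ha : a ≠ 0 := by rintro rfl; exact hχ₀ (zero_smul _ _)
  have hψv : ψ (.ofMul v) = 0 := by
    simpa [ha] using hχ₀v v (Subgroup.mem_zpowers v)
  simp [hψv]

end IsPGroup

theorem Finset.card_add_card_filter_two_le_sum {ι : Type*} [Fintype ι] {f : ι → ℕ}
    (hf : ∀ i, 1 ≤ f i) : Fintype.card ι + #{i | 2 ≤ f i} ≤ ∑ i, f i := by
  calc Fintype.card ι + #{i | 2 ≤ f i} = ∑ i, (1 + if 2 ≤ f i then 1 else 0) := by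
        simp [Finset.sum_add_distrib, Finset.sum_boole]
    _ ≤ ∑ i, f i := Finset.sum_le_sum fun i _ => by have := hf i; split_ifs <;> omega

theorem Fin.card_filter_castSucc_or_succ_le {n : ℕ} (P : Fin (n + 1) → Prop) [DecidablePred P] :
    #{e : Fin n | P e.castSucc ∨ P e.succ} ≤ 2 * #{i | P i} := by
  have hcast : #{e : Fin n | P e.castSucc} ≤ #{i | P i} :=
    Finset.card_le_card_of_injOn Fin.castSucc (fun e he => by simpa using he)
      (Fin.castSucc_injective n).injOn
  have hsucc : #{e : Fin n | P e.succ} ≤ #{i | P i} :=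
    Finset.card_le_card_of_injOn Fin.succ (fun e he => by simpa using he)
      (Fin.succ_injective n).injOn
  rw [Finset.filter_or]
  exact (Finset.card_union_le _ _).trans (by omega)

theorem Fin.exists_castSucc_eq_or_succ_eq {n : ℕ} (hn : 0 < n) (i : Fin (n + 1)) :
    (∃ e : Fin n, e.castSucc = i) ∨ ∃ e : Fin n, e.succ = i := by
  rcases Nat.lt_or_ge i n with h | h
  · exact .inl ⟨⟨i, h⟩, Fin.ext rfl⟩
  · exact .inr ⟨⟨n - 1, by omega⟩, Fin.ext (by simp; omega)⟩

theorem LinearMap.finrank_range_le_card_of_apply_eq_zero {K M ι : Type*} [Field K]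
    [AddCommGroup M] [Module K M] [Fintype ι] (f : M →ₗ[K] ι → K) (s : Finset ι)
    (hf : ∀ x, ∀ i ∉ s, f x i = 0) : finrank K (range f) ≤ #s := by
  have hinj : Function.Injective ((funLeft K K ((↑) : s → ι)).domRestrict (range f)) := by
    rintro ⟨_, x, rfl⟩ ⟨_, y, rfl⟩ h
    ext i
    by_cases hi : i ∈ s
    · exact congrFun h ⟨i, hi⟩
    · simp [hf x i hi, hf y i hi]
  simpa using finrank_le_finrank_of_injective hinj

section TopologicalGeneration

variable {G D : Type*} [Group G] [TopologicalSpace G] [IsTopologicalGroup G]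
  [Group D] [TopologicalSpace D] [T2Space D]

theorem ContinuousMonoidHom.eq_of_eqOn_of_topologicalClosure_eq_top {s : Set G}
    (hs : (Subgroup.closure s).topologicalClosure = ⊤) {F F' : G →ₜ* D} (h : s.EqOn F F') :
    F = F' := by
  have hle : (Subgroup.closure s).topologicalClosure ≤ MonoidHom.eqLocus F.toMonoidHom F' :=
    Subgroup.topologicalClosure_minimal _ ((Subgroup.closure_le _).2 h)
      (isClosed_eq F.continuous F'.continuous)
  ext g
  exact hle (hs ▸ Subgroup.mem_top g)

theorem ContinuousMonoidHom.injective_restrict {s : Set G}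
    (hs : (Subgroup.closure s).topologicalClosure = ⊤) :
    Function.Injective fun (F : G →ₜ* D) (x : s) => F x := fun _ _ h =>
  eq_of_eqOn_of_topologicalClosure_eq_top hs fun x hx => congrFun h ⟨x, hx⟩

theorem finite_continuousMonoidHom [Finite D] (hG : TopFG G) : Finite (G →ₜ* D) :=
  let ⟨_, hS⟩ := hG
  Finite.of_injective _ (ContinuousMonoidHom.injective_restrict hS)

theorem card_continuousMonoidHom_le_pow_dmin [Finite D] (hG : TopFG G) :
    Nat.card (G →ₜ* D) ≤ Nat.card D ^ dmin G := by
  obtain ⟨S, hcard, hS⟩ : dmin G ∈ {n : ℕ | ∃ S : Finset G, S.card = n ∧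
      (Subgroup.closure (S : Set G)).topologicalClosure = ⊤} :=
    Nat.sInf_mem (let ⟨S, hS⟩ := hG; ⟨_, S, rfl, hS⟩)
  calc Nat.card (G →ₜ* D) ≤ Nat.card (S → D) :=
        Nat.card_le_card_of_injective _ (ContinuousMonoidHom.injective_restrict hS)
    _ = Nat.card D ^ dmin G := by
      rw [Nat.card_fun, Nat.card_eq_fintype_card (α := S), Fintype.card_coe, hcard]

end TopologicalGeneration

theorem isProP_of_finite {p : ℕ} [Fact p.Prime] {P : Type*} [Group P] [TopologicalSpace P]
    [IsTopologicalGroup P] [Finite P] [DiscreteTopology P] (hP : IsPGroup p P) : IsProP p P :=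
  ⟨Finite.compactSpace, inferInstance, fun U _ _ => hP.index U⟩

section Segment

variable {p : ℕ} {n : ℕ} {V : Fin (n + 1) → Type*} [∀ i, Group (V i)]
  {E : Fin n → Type*} [∀ e, Group (E e)]

variable (p) in
def edgeDefect (x : ∀ e : Fin n, V e.castSucc) (y : ∀ e : Fin n, V e.succ) :
    (∀ i, Additive (V i) →+ ZMod p) →ₗ[ZMod p] Fin n → ZMod p where
  toFun χ e := χ e.castSucc (.ofMul (x e)) - χ e.succ (.ofMul (y e))
  map_add' χ ψ := by ext e; simp only [Pi.add_apply, AddMonoidHom.add_apply]; ring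
  map_smul' c χ := by ext e; simp only [Pi.smul_apply, AddMonoidHom.smul_apply, smul_eq_mul,
    RingHom.id_apply]; ring

theorem comp_eq_comp_of_mem_ker_edgeDefect (l : ∀ e, E e →* V e.castSucc)
    (r : ∀ e, E e →* V e.succ) {g : ∀ e, E e} (hg : ∀ e, Subgroup.zpowers (g e) = ⊤)
    {χ : ∀ i, Additive (V i) →+ ZMod p}
    (hχ : χ ∈ LinearMap.ker (edgeDefect p (fun e => l e (g e)) (fun e => r e (g e))))
    (e : Fin n) :
    (χ e.castSucc).toMultiplicativeRight.comp (l e) =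
      (χ e.succ).toMultiplicativeRight.comp (r e) := by
  refine MonoidHom.eq_of_eqOn_dense (s := {g e}) (by rw [← Subgroup.zpowers_eq_closure, hg]) ?_
  rintro _ rfl
  simpa [edgeDefect, sub_eq_zero] using congrFun hχ e

theorem card_ker_edgeDefect_le (l : ∀ e, E e →* V e.castSucc) (r : ∀ e, E e →* V e.succ)
    {g : ∀ e, E e} (hg : ∀ e, Subgroup.zpowers (g e) = ⊤) {G : Type*} [Group G]
    [TopologicalSpace G] [Finite (G →ₜ* Multiplicative (ZMod p))] (ι : ∀ i, V i →* G)
    (hlift : ∀ f : ∀ i, V i →* Multiplicative (ZMod p),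
      (∀ e, (f e.castSucc).comp (l e) = (f e.succ).comp (r e)) →
        ∃ F : G →* Multiplicative (ZMod p), Continuous F ∧ ∀ i, F.comp (ι i) = f i) :
    Nat.card (LinearMap.ker (edgeDefect p (fun e => l e (g e)) (fun e => r e (g e)))) ≤
      Nat.card (G →ₜ* Multiplicative (ZMod p)) := by
  choose F hFcont hF using fun χ : LinearMap.ker (edgeDefect p _ _) =>
    hlift (fun i => (χ.1 i).toMultiplicativeRight)
      (comp_eq_comp_of_mem_ker_edgeDefect l r hg χ.2)
  refine Nat.card_le_card_of_injective (fun χ => ⟨F χ, hFcont χ⟩) fun χ χ' h => ?_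
  refine Subtype.ext (funext fun i => AddMonoidHom.toMultiplicativeRight.injective ?_)
  rw [← hF χ i, ← hF χ' i]
  exact congrArg (fun F : G →ₜ* Multiplicative (ZMod p) => F.toMonoidHom.comp (ι i)) h

variable [Fact p.Prime] [∀ i, Finite (V i)]

theorem add_two_le_two_mul_finrank_ker_edgeDefect (hn : 0 < n) (hV : ∀ i, IsPGroup p (V i))
    {x : ∀ e : Fin n, V e.castSucc} {y : ∀ e : Fin n, V e.succ}
    (hx : ∀ e, Subgroup.zpowers (x e) ≠ ⊤) (hy : ∀ e, Subgroup.zpowers (y e) ≠ ⊤) :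
    n + 2 ≤ 2 * finrank (ZMod p) (LinearMap.ker (edgeDefect p x y)) := by
  let d : Fin (n + 1) → ℕ := fun i => finrank (ZMod p) (Additive (V i) →+ ZMod p)
  have hd : ∀ i, 1 ≤ d i := fun i => by
    obtain ⟨e, rfl⟩ | ⟨e, rfl⟩ := Fin.exists_castSucc_eq_or_succ_eq hn i
    · have := nontrivial_of_zpowers_ne_top (hx e); exact (hV _).one_le_finrank_addMonoidHom
    · have := nontrivial_of_zpowers_ne_top (hy e); exact (hV _).one_le_finrank_addMonoidHom
  have hrange : finrank (ZMod p) (LinearMap.range (edgeDefect p x y)) ≤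
      #{e : Fin n | 2 ≤ d e.castSucc ∨ 2 ≤ d e.succ} := by
    refine LinearMap.finrank_range_le_card_of_apply_eq_zero _ _ fun χ e he => ?_
    simp only [mem_filter, mem_univ, true_and, not_or, not_le, Nat.lt_succ_iff] at he
    simp [edgeDefect, (hV _).addMonoidHom_apply_eq_zero_of_finrank_le_one (hx e) he.1,
      (hV _).addMonoidHom_apply_eq_zero_of_finrank_le_one (hy e) he.2]
  have hrank : finrank (ZMod p) (LinearMap.range (edgeDefect p x y)) +
      finrank (ZMod p) (LinearMap.ker (edgeDefect p x y)) = ∑ i, d i := by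
    rw [LinearMap.finrank_range_add_finrank_ker, Module.finrank_pi_fintype]
  have hsum := Finset.card_add_card_filter_two_le_sum hd
  have hpair := Fin.card_filter_castSucc_or_succ_le fun i => 2 ≤ d i
  have hedges := Finset.card_filter_le (Finset.univ : Finset (Fin n))
    fun e => 2 ≤ d e.castSucc ∨ 2 ≤ d e.succ
  simp only [Fintype.card_fin, Finset.card_univ] at hsum hedges
  omega

end Segment

theorem dmin_segment_ge_general (p : ℕ) (hp : p.Prime) (n : ℕ)
    (V : Fin (n + 1) → Type) [∀ i, Group (V i)] [∀ i, Finite (V i)]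
    (hVp : ∀ i, IsPGroup p (V i))
    (E : Fin n → Type) [∀ e, Group (E e)]
    (hEcyc : ∀ e, IsCyclic (E e))
    (l : ∀ e : Fin n, E e →* V e.castSucc) (r : ∀ e : Fin n, E e →* V e.succ)
    (hl : ∀ e, Function.Injective (l e) ∧ ¬Function.Surjective (l e))
    (hr : ∀ e, Function.Injective (r e) ∧ ¬Function.Surjective (r e))
    (G : Type) [Group G] [TopologicalSpace G] [IsTopologicalGroup G]
    (ι : ∀ i, V i →* G)
    (hgen : (Subgroup.closure (⋃ i, Set.range ⇑(ι i))).topologicalClosure = ⊤)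
    -- universal property of the fundamental pro-p group of the segment of groups
    (huniv : ∀ (P : Type) [Group P] [TopologicalSpace P] [IsTopologicalGroup P], IsProP p P →
      ∀ f : ∀ i, V i →* P,
        (∀ e : Fin n, (f e.castSucc).comp (l e) = (f e.succ).comp (r e)) →
        ∃ F : G →* P, Continuous F ∧ ∀ i, F.comp (ι i) = f i) :
    n / 2 ≤ dmin G := by
  rcases Nat.eq_zero_or_pos n with rfl | hn
  · exact Nat.zero_le _
  have := Fact.mk hp
  choose g hg using fun e => (hEcyc e).exists_generator
  have hfin : (⋃ i, Set.range (ι i)).Finite := Set.finite_iUnion fun i => Set.finite_range _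
  have hG : TopFG G := ⟨hfin.toFinset, by rwa [hfin.coe_toFinset]⟩
  have := finite_continuousMonoidHom (D := Multiplicative (ZMod p)) hG
  have hrank := add_two_le_two_mul_finrank_ker_edgeDefect hn hVp
    (fun e => (l e).zpowers_apply_ne_top (hl e).2 (g e))
    (fun e => (r e).zpowers_apply_ne_top (hr e).2 (g e))
  have hlift := huniv (Multiplicative (ZMod p))
    (isProP_of_finite ZModModule.isPGroup_multiplicative)
  have hcard := (card_ker_edgeDefect_le l r (fun e => (Subgroup.eq_top_iff' _).2 (hg e)) ι
    hlift).trans (card_continuousMonoidHom_le_pow_dmin hG)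
  rw [Module.natCard_eq_pow_finrank (K := ZMod p), Nat.card_zmod,
    show Nat.card (Multiplicative (ZMod p)) = p from Nat.card_zmod p,
    Nat.pow_le_pow_iff_right hp.one_lt] at hcard
  omega

/-- For the fundamental pro-p group `G` of a segment of finite p-groups with cyclic edge
groups properly contained in the incident vertex groups (vertices `V 0, …, V n`, edge
`e` joining `V e.castSucc` and `V e.succ`), one has `d(G) ≥ n/2`; in particular `d(G)`
tends to infinity with the size of the segment. -/
theorem dmin_segment_ge (p : ℕ) (hp : p.Prime) (n : ℕ)
    (V : Fin (n + 1) → Type) [∀ i, Group (V i)] [∀ i, Finite (V i)]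
    (hVp : ∀ i, IsPGroup p (V i))
    (E : Fin n → Type) [∀ e, Group (E e)] [∀ e, Finite (E e)]
    (hEp : ∀ e, IsPGroup p (E e)) (hEcyc : ∀ e, IsCyclic (E e))
    (l : ∀ e : Fin n, E e →* V e.castSucc) (r : ∀ e : Fin n, E e →* V e.succ)
    (hl : ∀ e, Function.Injective (l e) ∧ ¬Function.Surjective (l e))
    (hr : ∀ e, Function.Injective (r e) ∧ ¬Function.Surjective (r e))
    (G : Type) [Group G] [TopologicalSpace G] [IsTopologicalGroup G] (hG : IsProP p G)
    (ι : ∀ i, V i →* G) (hinj : ∀ i, Function.Injective (ι i))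
    (hcomm : ∀ e : Fin n, (ι e.castSucc).comp (l e) = (ι e.succ).comp (r e))
    (hgen : (Subgroup.closure (⋃ i, Set.range ⇑(ι i))).topologicalClosure = ⊤)
    -- universal property of the fundamental pro-p group of the segment of groups
    (huniv : ∀ (P : Type) [Group P] [TopologicalSpace P] [IsTopologicalGroup P], IsProP p P →
      ∀ f : ∀ i, V i →* P,
        (∀ e : Fin n, (f e.castSucc).comp (l e) = (f e.succ).comp (r e)) →
        ∃ F : G →* P, Continuous F ∧ ∀ i, F.comp (ι i) = f i) :
    n / 2 ≤ dmin G :=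
  dmin_segment_ge_general p hp n V hVp E hEcyc l r hl hr G ι hgen huniv
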